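/- arXiv:2207.10007 — 2 statements merged into one kernel-verified Lean document; each statement's English description precedes it below -/
import Mathlib

section
/- Let Ũ be a d×d complex matrix (not necessarily unitary) with ‖Ũ†Ũ − I‖ ≤ ε for some ε ∈ [0,1]. Then the operator norm of (1/4)(3Ũ† − Ũ†ŨŨ†)(3Ũ − ŨŨ†Ũ) − I is at most (3/4)ε² + (1/4)ε³; in particular, the success probability of oblivious amplitude amplification (1/4)‖(3Ũ − ŨŨ†Ũ)|ψ⟩‖² is at least 1 − (3/4)ε² − (1/4)ε³ for any unit vector |ψ⟩. -/
open Matrix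
open scoped Matrix.Norms.L2Operator

/-!
With `E = ŨᴴŨ - 1` we have `3Ũ - ŨŨᴴŨ = Ũ(2 - E)`, so the OAA operator is
`(2 - E)(1 + E)(2 - E)/4 = 1 + (E³ - 3E²)/4`, and submultiplicativity of the operator norm
bounds its distance to `1`. The success probability is `⟨ψ, (Ũ')ᴴŨ'ψ⟩/4` with
`Ũ' = 3Ũ - ŨŨᴴŨ`, which differs from `⟨ψ, ψ⟩ = 1` by at most that distance.
-/

theorem oaa_operator_sub_one_eq {𝕜 A : Type*} [Field 𝕜] [CharZero 𝕜] [Ring A] [Algebra 𝕜 A]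
    (U V : A) :
    (1 / 4 : 𝕜) • (((3 : 𝕜) • V - V * U * V) * ((3 : 𝕜) • U - U * V * U)) - 1 =
      (1 / 4 : 𝕜) • ((V * U - 1) ^ 3 - (3 : 𝕜) • (V * U - 1) ^ 2) := by
  noncomm_ring
  module

theorem norm_oaa_operator_sub_one_le {𝕜 A : Type*} [RCLike 𝕜] [NormedRing A]
    [NormedAlgebra 𝕜 A] (U V : A) {ε : ℝ} (h : ‖V * U - 1‖ ≤ ε) :
    ‖(1 / 4 : 𝕜) • (((3 : 𝕜) • V - V * U * V) * ((3 : 𝕜) • U - U * V * U)) - 1‖ ≤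
      3 / 4 * ε ^ 2 + 1 / 4 * ε ^ 3 := by
  set E := V * U - 1
  have norm_pow_le : ∀ n, 0 < n → ‖E ^ n‖ ≤ ε ^ n := fun n hn =>
    (norm_pow_le' E hn).trans (pow_le_pow_left₀ (norm_nonneg E) h n)
  rw [oaa_operator_sub_one_eq, norm_smul]
  calc ‖(1 / 4 : 𝕜)‖ * ‖E ^ 3 - (3 : 𝕜) • E ^ 2‖
      ≤ 1 / 4 * (‖E ^ 3‖ + 3 * ‖E ^ 2‖) := by
        have := norm_sub_le (E ^ 3) ((3 : 𝕜) • E ^ 2)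
        rw [norm_smul] at this
        norm_num at this ⊢
        linarith
    _ ≤ 3 / 4 * ε ^ 2 + 1 / 4 * ε ^ 3 := by
        nlinarith [norm_pow_le 3 (by norm_num), norm_pow_le 2 (by norm_num)]

theorem ContinuousLinearMap.one_sub_le_mul_norm_apply_sq {𝕜 H : Type*} [RCLike 𝕜]
    [NormedAddCommGroup H] [InnerProductSpace 𝕜 H] [CompleteSpace H]
    (T : H →L[𝕜] H) (c : ℝ) {x : H} (hx : ‖x‖ = 1) :
    1 - ‖(c : 𝕜) • (adjoint T * T) - 1‖ ≤ c * ‖T x‖ ^ 2 := by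
  set S := (c : 𝕜) • (adjoint T * T) - 1
  have re_inner_eq : RCLike.re (inner 𝕜 x (S x)) = c * ‖T x‖ ^ 2 - 1 := by
    simp [S, inner_sub_right, inner_smul_right, adjoint_inner_right, hx]
  have abs_re_inner_le : |RCLike.re (inner 𝕜 x (S x))| ≤ ‖S‖ :=
    calc _ ≤ ‖inner 𝕜 x (S x)‖ := RCLike.abs_re_le_norm _
      _ ≤ ‖x‖ * ‖S x‖ := norm_inner_le_norm _ _
      _ ≤ ‖S‖ := by simpa [hx] using S.le_opNorm x
  rw [re_inner_eq] at abs_re_inner_le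
  linarith [neg_abs_le (c * ‖T x‖ ^ 2 - 1)]

theorem Matrix.one_sub_le_mul_norm_toEuclideanLin_sq {𝕜 n : Type*} [RCLike 𝕜] [Fintype n]
    [DecidableEq n] (B : Matrix n n 𝕜) (c : ℝ) {x : EuclideanSpace 𝕜 n} (hx : ‖x‖ = 1) :
    1 - ‖(c : 𝕜) • (Bᴴ * B) - 1‖ ≤ c * ‖toEuclideanLin B x‖ ^ 2 := by
  set T := toEuclideanCLM (n := n) (𝕜 := 𝕜) B
  have toEuclideanCLM_eq : toEuclideanCLM (n := n) (𝕜 := 𝕜) ((c : 𝕜) • (Bᴴ * B) - 1) =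
      (c : 𝕜) • (ContinuousLinearMap.adjoint T * T) - 1 := by
    rw [← ContinuousLinearMap.star_eq_adjoint, ← star_eq_conjTranspose, map_sub, map_smul,
      map_mul, map_star, map_one]
  rw [cstar_norm_def, toEuclideanCLM_eq]
  exact T.one_sub_le_mul_norm_apply_sq c hx

theorem oaa_success_probability_general (d : ℕ) (U : Matrix (Fin d) (Fin d) ℂ) (ε : ℝ)
    (h : ‖Uᴴ * U - 1‖ ≤ ε) :
    ‖(1 / 4 : ℂ) • (((3 : ℂ) • Uᴴ - Uᴴ * U * Uᴴ) * ((3 : ℂ) • U - U * Uᴴ * U)) - 1‖ ≤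
        3 / 4 * ε ^ 2 + 1 / 4 * ε ^ 3 ∧
      ∀ ψ : EuclideanSpace ℂ (Fin d), ‖ψ‖ = 1 →
        1 - (3 / 4 * ε ^ 2 + 1 / 4 * ε ^ 3) ≤
          1 / 4 * ‖Matrix.toEuclideanLin ((3 : ℂ) • U - U * Uᴴ * U) ψ‖ ^ 2 := by
  have norm_le := norm_oaa_operator_sub_one_le (𝕜 := ℂ) U Uᴴ h
  refine ⟨norm_le, fun ψ hψ => ?_⟩
  have conjTranspose_eq : ((3 : ℂ) • U - U * Uᴴ * U)ᴴ = (3 : ℂ) • Uᴴ - Uᴴ * U * Uᴴ := by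
    simp [conjTranspose_mul, Matrix.mul_assoc]
  have := ((3 : ℂ) • U - U * Uᴴ * U).one_sub_le_mul_norm_toEuclideanLin_sq (1 / 4) hψ
  rw [conjTranspose_eq] at this
  push_cast at this
  linarith

/-- If `‖ŨᴴŨ − I‖ ≤ ε` with `ε ∈ [0,1]`, then the OAA operator
`(1/4)(3Ũᴴ − ŨᴴŨŨᴴ)(3Ũ − ŨŨᴴŨ)` is within `(3/4)ε² + (1/4)ε³` of the identity in operator
norm; in particular the success probability `(1/4)‖(3Ũ − ŨŨᴴŨ)|ψ⟩‖²` is at least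
`1 − (3/4)ε² − (1/4)ε³` for any unit vector `ψ`. -/
theorem oaa_success_probability (d : ℕ) (U : Matrix (Fin d) (Fin d) ℂ) (ε : ℝ)
    (hε : ε ∈ Set.Icc (0 : ℝ) 1) (h : ‖Uᴴ * U - 1‖ ≤ ε) :
    ‖(1 / 4 : ℂ) • (((3 : ℂ) • Uᴴ - Uᴴ * U * Uᴴ) * ((3 : ℂ) • U - U * Uᴴ * U)) - 1‖ ≤
        3 / 4 * ε ^ 2 + 1 / 4 * ε ^ 3 ∧
      ∀ ψ : EuclideanSpace ℂ (Fin d), ‖ψ‖ = 1 →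
        1 - (3 / 4 * ε ^ 2 + 1 / 4 * ε ^ 3) ≤
          1 / 4 * ‖Matrix.toEuclideanLin ((3 : ℂ) • U - U * Uᴴ * U) ψ‖ ^ 2 :=
  oaa_success_probability_general d U ε h
end

section
/- Let A be a d×d matrix written as A = H₁ + iH₂ with H₁ = (A + A†)/2 and H₂ = −i(A − A†)/2, and suppose H₁ = (U₁ + U₁†)/2 and H₂ = (U₂ + U₂†)/2 for unitaries U₁, U₂. Then for any Hermitian O and unit vector |ψ⟩: ⟨ψ|A†OA|ψ⟩ = (1/4)(⟨U₁†OU₁⟩ + ⟨U₁OU₁†⟩ + ⟨U₂†OU₂⟩ + ⟨U₂OU₂†⟩) + (1/2)Re⟨U₁OU₁⟩ + (1/2)Re⟨U₂OU₂⟩ − (1/2)Im(⟨U₁OU₂⟩ + ⟨U₁OU₂†⟩ + ⟨U₁†OU₂⟩ + ⟨U₁†OU₂†⟩), where ⟨X⟩ := ⟨ψ|X|ψ⟩. -/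
open Matrix

/-- Four-unitary decomposition expectation formula: with `A = H₁ + iH₂`,
`H₁ = (A+Aᴴ)/2 = (U₁+U₁ᴴ)/2`, `H₂ = −i(A−Aᴴ)/2 = (U₂+U₂ᴴ)/2` for unitaries `U₁,U₂`,
`O` Hermitian and `ψ` a unit vector, `⟨ψ|AᴴOA|ψ⟩` equals the stated combination of the
expectations `⟨X⟩ = ⟨ψ|X|ψ⟩`. -/
theorem expectation_four_unitary (d : ℕ) (A U₁ U₂ O : Matrix (Fin d) (Fin d) ℂ)
    (hU₁ : U₁ ∈ Matrix.unitaryGroup (Fin d) ℂ) (hU₂ : U₂ ∈ Matrix.unitaryGroup (Fin d) ℂ)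
    (h₁ : A + Aᴴ = U₁ + U₁ᴴ)
    (h₂ : (-Complex.I) • (A - Aᴴ) = U₂ + U₂ᴴ)
    (hO : O.IsHermitian) (ψ : Fin d → ℂ) (hψ : star ψ ⬝ᵥ ψ = 1) :
    star ψ ⬝ᵥ ((Aᴴ * O * A) *ᵥ ψ) =
      (1 / 4 : ℂ) *
          (star ψ ⬝ᵥ ((U₁ᴴ * O * U₁) *ᵥ ψ) + star ψ ⬝ᵥ ((U₁ * O * U₁ᴴ) *ᵥ ψ) +
            star ψ ⬝ᵥ ((U₂ᴴ * O * U₂) *ᵥ ψ) + star ψ ⬝ᵥ ((U₂ * O * U₂ᴴ) *ᵥ ψ)) +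
        (1 / 2 : ℂ) * ((star ψ ⬝ᵥ ((U₁ * O * U₁) *ᵥ ψ)).re : ℂ) +
        (1 / 2 : ℂ) * ((star ψ ⬝ᵥ ((U₂ * O * U₂) *ᵥ ψ)).re : ℂ) -
        (1 / 2 : ℂ) *
          (((star ψ ⬝ᵥ ((U₁ * O * U₂) *ᵥ ψ) + star ψ ⬝ᵥ ((U₁ * O * U₂ᴴ) *ᵥ ψ) +
              star ψ ⬝ᵥ ((U₁ᴴ * O * U₂) *ᵥ ψ) + star ψ ⬝ᵥ ((U₁ᴴ * O * U₂ᴴ) *ᵥ ψ)).im : ℂ)) := by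
  set E : Matrix (Fin d) (Fin d) ℂ → ℂ := fun X => star ψ ⬝ᵥ (X *ᵥ ψ) with hE
  have hconj : ∀ X : Matrix (Fin d) (Fin d) ℂ,
      (starRingEnd ℂ) (E X) = E Xᴴ := by
    intro X
    show star (star ψ ⬝ᵥ (X *ᵥ ψ)) = star ψ ⬝ᵥ (Xᴴ *ᵥ ψ)
    rw [← star_dotProduct, star_mulVec, dotProduct_comm, dotProduct_mulVec,
      dotProduct_comm]
  have hadd : ∀ X Y : Matrix (Fin d) (Fin d) ℂ, E (X + Y) = E X + E Y := by
    intro X Y; simp [hE, add_mulVec, dotProduct_add]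
  have hsub : ∀ X Y : Matrix (Fin d) (Fin d) ℂ, E (X - Y) = E X - E Y := by
    intro X Y; simp [hE, sub_mulVec, dotProduct_sub]
  have hsmul : ∀ (c : ℂ) (X : Matrix (Fin d) (Fin d) ℂ), E (c • X) = c * E X := by
    intro c X; simp [hE, smul_mulVec, dotProduct_smul, smul_eq_mul]
  set P : Matrix (Fin d) (Fin d) ℂ := U₁ + U₁ᴴ with hP
  set Q : Matrix (Fin d) (Fin d) ℂ := U₂ + U₂ᴴ with hQ
  have hPh : Pᴴ = P := by simp [hP, add_comm]
  have hQh : Qᴴ = Q := by simp [hQ, add_comm]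
  have hdiff : A - Aᴴ = Complex.I • Q := by
    have := congrArg (fun M => Complex.I • M) h₂
    simpa only [smul_smul, mul_neg, Complex.I_mul_I, neg_neg, one_smul] using this
  have hA2 : (2 : ℂ) • A = P + Complex.I • Q := by
    rw [← h₁, ← hdiff]; module
  have hAc2 : (2 : ℂ) • Aᴴ = P - Complex.I • Q := by
    rw [← h₁, ← hdiff]; module
  have hmat : (4 : ℂ) • (Aᴴ * O * A) =
      P * O * P + Q * O * Q + Complex.I • (P * O * Q) - Complex.I • (Q * O * P) := by
    have h22 : (4 : ℂ) • (Aᴴ * O * A) = ((2 : ℂ) • Aᴴ) * O * ((2 : ℂ) • A) := by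
      rw [smul_mul_assoc, smul_mul_assoc, mul_smul_comm, smul_smul]; norm_num
    rw [h22, hA2, hAc2]
    simp only [sub_mul, add_mul, mul_add, smul_mul_assoc, mul_smul_comm, smul_smul]
    match_scalars <;> simp [Complex.I_sq] <;> ring
  have hE4 : (4 : ℂ) * E (Aᴴ * O * A) =
      E (P * O * P) + E (Q * O * Q) + Complex.I * E (P * O * Q)
        - Complex.I * E (Q * O * P) := by
    have := congrArg E hmat
    simpa only [hadd, hsub, hsmul] using this
  have hsand : ∀ X Y : Matrix (Fin d) (Fin d) ℂ, Xᴴ = X → Yᴴ = Y →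
      (starRingEnd ℂ) (E (X * O * Y)) = E (Y * O * X) := by
    intro X Y hX hY
    rw [hconj]
    congr 1
    rw [conjTranspose_mul, conjTranspose_mul, hO.eq, hX, hY, mul_assoc]
  have hQOP : E (Q * O * P) = (starRingEnd ℂ) (E (P * O * Q)) := by
    rw [hsand P Q hPh hQh]
  have expandE : ∀ X Y : Matrix (Fin d) (Fin d) ℂ,
      E ((X + Xᴴ) * O * (Y + Yᴴ)) = E (X * O * Y) + E (X * O * Yᴴ) + E (Xᴴ * O * Y)
        + E (Xᴴ * O * Yᴴ) := by
    intro X Y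
    simp only [add_mul, mul_add, hadd]
    ring
  have hU1c : E (U₁ᴴ * O * U₁ᴴ) = (starRingEnd ℂ) (E (U₁ * O * U₁)) := by
    rw [hconj]; congr 1; simp [conjTranspose_mul, hO.eq, mul_assoc]
  have hU2c : E (U₂ᴴ * O * U₂ᴴ) = (starRingEnd ℂ) (E (U₂ * O * U₂)) := by
    rw [hconj]; congr 1; simp [conjTranspose_mul, hO.eq, mul_assoc]
  set w : ℂ := E (U₁ * O * U₂) + E (U₁ * O * U₂ᴴ) + E (U₁ᴴ * O * U₂) + E (U₁ᴴ * O * U₂ᴴ)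
    with hw
  have hPOQ : E (P * O * Q) = w := by rw [hP, hQ, expandE, hw]
  have hPOP : E (P * O * P) = E (U₁ * O * U₁) + E (U₁ * O * U₁ᴴ) + E (U₁ᴴ * O * U₁)
      + E (U₁ᴴ * O * U₁ᴴ) := by rw [hP, expandE]
  have hQOQ : E (Q * O * Q) = E (U₂ * O * U₂) + E (U₂ * O * U₂ᴴ) + E (U₂ᴴ * O * U₂)
      + E (U₂ᴴ * O * U₂ᴴ) := by rw [hQ, expandE]
  have r1 : E (U₁ * O * U₁) + (starRingEnd ℂ) (E (U₁ * O * U₁)) =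
      2 * ((E (U₁ * O * U₁)).re : ℂ) := by
    rw [Complex.add_conj]; push_cast; ring
  have r2 : E (U₂ * O * U₂) + (starRingEnd ℂ) (E (U₂ * O * U₂)) =
      2 * ((E (U₂ * O * U₂)).re : ℂ) := by
    rw [Complex.add_conj]; push_cast; ring
  have r3 : Complex.I * w - Complex.I * (starRingEnd ℂ) w = -2 * (w.im : ℂ) := by
    rw [← mul_sub, Complex.sub_conj]
    push_cast
    linear_combination (2 * (w.im : ℂ)) * Complex.I_mul_I
  have key : (4 : ℂ) * E (Aᴴ * O * A) =
      E (U₁ * O * U₁ᴴ) + E (U₁ᴴ * O * U₁) + E (U₂ * O * U₂ᴴ) + E (U₂ᴴ * O * U₂)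
      + 2 * ((E (U₁ * O * U₁)).re : ℂ) + 2 * ((E (U₂ * O * U₂)).re : ℂ)
      - 2 * ((w.im : ℂ)) := by
    rw [hE4, hPOP, hQOQ, hPOQ, hQOP, hPOQ, hU1c, hU2c]
    linear_combination r1 + r2 + r3
  have h4 : E (Aᴴ * O * A) = (1/4 : ℂ) * ((4 : ℂ) * E (Aᴴ * O * A)) := by ring
  show E (Aᴴ * O * A) = _
  rw [h4, key, hw]
  ring
end
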